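/- Define f(m,r,s₁,s₂) = ∑_{t=0}^{m+r-1} (-1)^t · (m+r-t) · C(r-s₁, t-s₁-s₂). If m, s₁, s₂ ≥ 0 are integers with s₁ + s₂ ≤ m, then f(m, m+1, s₁, s₂) = 0 unless (s₁,s₂) = (m,0), in which case f(m, m+1, m, 0) = (-1)^m. -/

import Mathlib

def C (n k : ℤ) : ℤ := if 0 ≤ k ∧ k ≤ n then (n.toNat.choose k.toNat : ℤ) else 0

def f (m r s₁ s₂ : ℕ) : ℤ :=
  ∑ t ∈ Finset.range (m + r), (-1 : ℤ) ^ t * ((m : ℤ) + r - t) * C ((r : ℤ) - s₁) ((t : ℤ) - s₁ - s₂)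

/-! Substituting `t = s₁ + s₂ + j` turns `f m r s₁ s₂` into
`(-1)^(s₁+s₂) ∑ⱼ (-1)^j (b - j) C(r - s₁, j)` with `b = m + r - s₁ - s₂`. As
`∑ⱼ (-1)^j C(n, j) = [n = 0]` and `∑ⱼ (-1)^j j C(n, j) = -[n = 1]`, for `r = m + 1`, where
`n = m + 1 - s₁ ≥ 1`, only the case `n = 1`, i.e. `s₁ = m`, survives. -/

open Finset

theorem C_natCast (n k : ℕ) : C n k = n.choose k := by
  unfold C
  split_ifs with h
  · simp
  · rw [Nat.choose_eq_zero_of_lt (by omega), Nat.cast_zero]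

theorem C_of_neg {n k : ℤ} (hk : k < 0) : C n k = 0 :=
  if_neg fun h => hk.not_ge h.1

theorem alternating_sum_range_mul_choose (n : ℕ) :
    ∑ j ∈ range (n + 1), (-1 : ℤ) ^ j * j * n.choose j = if n = 1 then -1 else 0 := by
  cases n with
  | zero => simp
  | succ n =>
    have hterm (i : ℕ) : (-1 : ℤ) ^ (i + 1) * ((i + 1 : ℕ) : ℤ) * (n + 1).choose (i + 1)
        = -(n + 1) * ((-1) ^ i * n.choose i) := by
      have := Nat.add_one_mul_choose_eq n i
      push_cast
      linear_combination (-1 : ℤ) ^ i * (by exact_mod_cast this :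
        ((n : ℤ) + 1) * n.choose i = (n + 1).choose (i + 1) * (i + 1))
    rw [sum_range_succ', sum_congr rfl fun i _ => hterm i, ← mul_sum,
      Int.alternating_sum_range_choose]
    rcases eq_or_ne n 0 with rfl | hn <;> simp [*]

theorem alternating_sum_range_sub_mul_choose (n : ℕ) (b : ℤ) :
    ∑ j ∈ range (n + 1), (-1 : ℤ) ^ j * (b - j) * n.choose j
      = (if n = 0 then b else 0) + if n = 1 then 1 else 0 := by
  have hsplit (j : ℕ) : (-1 : ℤ) ^ j * (b - j) * n.choose j
      = b * ((-1) ^ j * n.choose j) - (-1) ^ j * j * n.choose j := by ring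
  rw [sum_congr rfl fun j _ => hsplit j, sum_sub_distrib, ← mul_sum,
    Int.alternating_sum_range_choose, alternating_sum_range_mul_choose]
  split_ifs <;> simp

theorem f_eq_neg_one_pow_mul_sum_choose (m r s₁ s₂ : ℕ) (hs₁ : s₁ ≤ r) (hs₂ : s₂ ≤ m) :
    f m r s₁ s₂ = (-1) ^ (s₁ + s₂) * ∑ j ∈ range (r - s₁ + 1),
      (-1 : ℤ) ^ j * (((m : ℤ) + r - s₁ - s₂) - j) * (r - s₁).choose j := by
  -- The extra term `t = m + r` has coefficient `m + r - t = 0`; below `t = s₁ + s₂` the binomial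
  -- vanishes, and above `t = s₁ + s₂ + r - s₁` so does `choose`.
  have hlast : f m r s₁ s₂ = ∑ t ∈ range (s₁ + s₂ + (m + r + 1 - (s₁ + s₂))),
      (-1 : ℤ) ^ t * ((m : ℤ) + r - t) * C ((r : ℤ) - s₁) ((t : ℤ) - s₁ - s₂) := by
    rw [Nat.add_sub_cancel' (by omega), sum_range_succ, f]
    simp
  rw [hlast, sum_range_add, sum_eq_zero fun t ht => ?_, zero_add, mul_sum]
  · have hterm (j : ℕ) : (-1 : ℤ) ^ (s₁ + s₂ + j) * ((m : ℤ) + r - ((s₁ + s₂ + j : ℕ) : ℤ))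
          * C ((r : ℤ) - s₁) (((s₁ + s₂ + j : ℕ) : ℤ) - s₁ - s₂)
        = (-1) ^ (s₁ + s₂) * ((-1) ^ j * (((m : ℤ) + r - s₁ - s₂) - j) * (r - s₁).choose j) := by
      rw [show (r : ℤ) - s₁ = ((r - s₁ : ℕ) : ℤ) by omega,
        show ((s₁ + s₂ + j : ℕ) : ℤ) - s₁ - s₂ = j by push_cast; ring, C_natCast]
      push_cast
      ring
    rw [sum_congr rfl fun j _ => hterm j]
    refine (sum_subset (range_subset_range.2 (by omega)) fun j _ hj => ?_).symm
    rw [Nat.choose_eq_zero_of_lt (by simp at hj; omega)]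
    simp
  · rw [C_of_neg (by simp at ht; omega), mul_zero]

theorem f_self_add_one (m s₁ s₂ : ℕ) (h : s₁ + s₂ ≤ m) :
    f m (m + 1) s₁ s₂ = if s₁ = m then (-1) ^ (s₁ + s₂) else 0 := by
  rw [f_eq_neg_one_pow_mul_sum_choose m (m + 1) s₁ s₂ (by omega) (by omega),
    alternating_sum_range_sub_mul_choose, if_neg (by omega)]
  by_cases hs₁ : s₁ = m
  · simp [hs₁]
  · simp [hs₁, show m + 1 - s₁ ≠ 1 by omega]

theorem stmt3 (m s₁ s₂ : ℕ) (h : s₁ + s₂ ≤ m) :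
    ((s₁, s₂) ≠ (m, 0) → f m (m + 1) s₁ s₂ = 0) ∧ f m (m + 1) m 0 = (-1 : ℤ) ^ m := by
  refine ⟨fun hne => ?_, by simp [f_self_add_one]⟩
  have hs₁ : s₁ ≠ m := by
    rintro rfl
    exact hne (Prod.ext rfl (by omega))
  simp [f_self_add_one m s₁ s₂ h, hs₁]
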